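/- Let K be an algebraically closed field of characteristic zero and n ≥ 1. Let η : 𝔸ⁿ → 𝔸ⁿ be an étale morphism. If the pull-back map η* : VF(𝔸ⁿ) → VF(𝔸ⁿ) is bijective, then η is a polynomial automorphism of 𝔸ⁿ (i.e. its comorphism η^# is a K-algebra automorphism of K[x₁,…,xₙ]). -/

import Mathlib

open MvPolynomial

/-- The Lie algebra `VF(𝔸ⁿ) = Der_K(K[x₁,…,xₙ])` of polynomial vector fields. -/
noncomputable abbrev VF (n : ℕ) (K : Type*) [Field K] :=
  Derivation K (MvPolynomial (Fin n) K) (MvPolynomial (Fin n) K)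

/-- A polynomial map `η = (f₁,…,fₙ) : 𝔸ⁿ → 𝔸ⁿ` is étale if its Jacobian determinant
`det(∂fᵢ/∂xⱼ)` is a nonzero constant. -/
def IsEtale {n : ℕ} {K : Type*} [Field K] (f : Fin n → MvPolynomial (Fin n) K) : Prop :=
  ∃ c : K, c ≠ 0 ∧ (Matrix.of fun i j => pderiv j (f i)).det = C c

/-!
The kernel of `η^#` is stable under every `∂/∂xᵢ`, because `η^# ∘ ∂ᵢ = η*(∂ᵢ) ∘ η^#`. In
characteristic zero such an ideal is `0` or the whole ring: a nonzero element of minimal degree has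
all its partial derivatives zero, so it is a nonzero constant. For surjectivity, the invertible
Jacobian yields for every `h` a vector field `D` with `D f₁ = h`; writing `D = η*(δ)` gives
`h = D (η^# x₁) = η^# (δ x₁)`.
-/

open Matrix

namespace MvPolynomial

variable {σ R : Type*}

theorem totalDegree_pderiv_lt [CommSemiring R] {i : σ} {p : MvPolynomial σ R}
    (h : pderiv i p ≠ 0) : (pderiv i p).totalDegree < p.totalDegree := by
  classical
  have hlt : ∀ m ∈ (pderiv i p).support, (m.sum fun _ e => e) < p.totalDegree := by
    intro m hm
    have hm' : m + Finsupp.single i 1 ∈ p.support := by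
      rw [mem_support_iff, coeff_pderiv] at hm
      exact mem_support_iff.2 (left_ne_zero_of_mul hm)
    calc (m.sum fun _ e => e) < (m + Finsupp.single i 1).sum fun _ e => e := by
          rw [Finsupp.sum_add_index' (fun _ => rfl) (fun _ _ _ => rfl)]; simp
      _ ≤ p.totalDegree := le_totalDegree hm'
  obtain ⟨m, hm⟩ := support_nonempty.2 h
  exact (Finset.sup_lt_iff ((Nat.zero_le _).trans_lt (hlt m hm))).2 hlt

theorem eq_C_of_forall_pderiv_eq_zero [CommRing R] [IsAddTorsionFree R] {p : MvPolynomial σ R}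
    (h : ∀ i, pderiv i p = 0) : p = C (coeff 0 p) := by
  classical
  ext n
  rw [coeff_C]
  split_ifs with hn
  · rw [hn]
  obtain ⟨i, hi : n i ≠ 0⟩ := Finsupp.ne_iff.mp (Ne.symm hn)
  have hle : Finsupp.single i 1 ≤ n := Finsupp.single_le_iff.2 (Nat.one_le_iff_ne_zero.2 hi)
  have e := congr(coeff (n - Finsupp.single i 1) $(h i))
  rwa [coeff_pderiv, coeff_zero, tsub_add_cancel_of_le hle, Finsupp.coe_tsub, Pi.sub_apply,
    Finsupp.single_eq_same, Nat.cast_sub (Nat.one_le_iff_ne_zero.mpr hi), Nat.cast_one,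
    sub_add_cancel, mul_comm, ← nsmul_eq_mul, smul_eq_zero_iff_right hi] at e

theorem ideal_eq_bot_or_eq_top_of_pderiv_mem {K : Type*} [Field K] [CharZero K]
    {I : Ideal (MvPolynomial σ K)} (hI : ∀ i, ∀ p ∈ I, pderiv i p ∈ I) : I = ⊥ ∨ I = ⊤ := by
  refine or_iff_not_imp_left.2 fun hI_ne => ?_
  obtain ⟨p, hpI, hp⟩ := Submodule.exists_mem_ne_zero_of_ne_bot hI_ne
  induction hd : p.totalDegree using Nat.strong_induction_on generalizing p with
  | _ d ih =>
    by_cases hder : ∃ i, pderiv i p ≠ 0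
    · obtain ⟨i, hi⟩ := hder
      exact ih _ (hd ▸ totalDegree_pderiv_lt hi) _ (hI i p hpI) hi rfl
    · push Not at hder
      have hp_C := eq_C_of_forall_pderiv_eq_zero hder
      have hcoeff : coeff 0 p ≠ 0 := fun h0 => hp (by rw [hp_C, h0, map_zero])
      exact Ideal.eq_top_of_isUnit_mem I hpI (hp_C ▸ hcoeff.isUnit.map C)

theorem injective_of_map_pderiv_eq_zero {K B : Type*} [Field K] [CharZero K] [Semiring B]
    [Nontrivial B] (φ : MvPolynomial σ K →+* B) (hφ : ∀ i p, φ p = 0 → φ (pderiv i p) = 0) :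
    Function.Injective φ := by
  rw [RingHom.injective_iff_ker_eq_bot]
  exact (ideal_eq_bot_or_eq_top_of_pderiv_mem fun i p => hφ i p).resolve_right
    (RingHom.ker_ne_top φ)

theorem sum_smul_pderiv_apply [CommRing R] [Fintype σ] (v : σ → MvPolynomial σ R)
    (p : MvPolynomial σ R) :
    (∑ j, v j • pderiv j : Derivation R (MvPolynomial σ R) (MvPolynomial σ R)) p =
      ∑ j, v j * pderiv j p := by
  rw [← Derivation.coeFnAddMonoidHom_apply, map_sum, Finset.sum_apply]
  simp only [Derivation.coeFnAddMonoidHom_apply, Derivation.smul_apply, smul_eq_mul]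

theorem exists_derivation_apply_eq_of_isUnit_det [CommRing R] [Fintype σ] [DecidableEq σ]
    {f : σ → MvPolynomial σ R} (hf : IsUnit (of fun i j => pderiv j (f i)).det)
    (g : σ → MvPolynomial σ R) :
    ∃ D : Derivation R (MvPolynomial σ R) (MvPolynomial σ R), ∀ i, D (f i) = g i := by
  set J := of fun i j => pderiv j (f i)
  refine ⟨∑ j, (J⁻¹ *ᵥ g) j • pderiv j, fun i => ?_⟩
  rw [sum_smul_pderiv_apply]
  calc ∑ j, (J⁻¹ *ᵥ g) j * pderiv j (f i) = (J *ᵥ (J⁻¹ *ᵥ g)) i := by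
        simp only [mulVec, dotProduct, mul_comm]; rfl
    _ = g i := by rw [mulVec_mulVec, mul_nonsing_inv J hf, one_mulVec]

end MvPolynomial

theorem etale_with_bijective_pullback_is_auto_general {K : Type*} [Field K]
    [CharZero K] {n : ℕ} (hn : 1 ≤ n)
    (f : Fin n → MvPolynomial (Fin n) K) (hf : IsEtale f)
    (Φ : VF n K → VF n K)
    (hΦ : ∀ (δ : VF n K) (g : MvPolynomial (Fin n) K), Φ δ (aeval f g) = aeval f (δ g))
    (hbij : Function.Bijective Φ) :
    Function.Bijective (aeval (R := K) f :
      MvPolynomial (Fin n) K →ₐ[K] MvPolynomial (Fin n) K) := by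
  refine ⟨injective_of_map_pderiv_eq_zero (aeval f).toRingHom fun i p hp => ?_, fun h => ?_⟩
  · change aeval f (pderiv i p) = 0
    rw [← hΦ, show aeval f p = 0 from hp, map_zero]
  · obtain ⟨c, hc, hdet⟩ := hf
    obtain ⟨D, hD⟩ := exists_derivation_apply_eq_of_isUnit_det (hdet ▸ hc.isUnit.map C) fun _ => h
    obtain ⟨δ, rfl⟩ := hbij.2 D
    let i₀ : Fin n := ⟨0, hn⟩
    refine ⟨δ (X i₀), ?_⟩
    rw [← hD i₀, ← hΦ, aeval_X]

/-- If `η` is an étale morphism of `𝔸ⁿ` whose pull-back map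
`η* : VF(𝔸ⁿ) → VF(𝔸ⁿ)` (characterized by `η*(δ) ∘ η^# = η^# ∘ δ`) is bijective, then `η`
is an automorphism of `𝔸ⁿ`, i.e. its comorphism `η^# = aeval f` is a `K`-algebra
automorphism. -/
theorem etale_with_bijective_pullback_is_auto {K : Type*} [Field K] [IsAlgClosed K]
    [CharZero K] {n : ℕ} (hn : 1 ≤ n)
    (f : Fin n → MvPolynomial (Fin n) K) (hf : IsEtale f)
    (Φ : VF n K → VF n K)
    (hΦ : ∀ (δ : VF n K) (g : MvPolynomial (Fin n) K), Φ δ (aeval f g) = aeval f (δ g))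
    (hbij : Function.Bijective Φ) :
    Function.Bijective (aeval (R := K) f :
      MvPolynomial (Fin n) K →ₐ[K] MvPolynomial (Fin n) K) :=
  etale_with_bijective_pullback_is_auto_general hn f hf Φ hΦ hbij
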